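/- For an ordinal κ, if Q ⊆ Baire space × κ admits a scale, then the set P = {x : there exists α < κ with (x,α) ∈ Q} admits a scale. -/

import Mathlib

/-- Baire space: the functions from `ℕ` to `ℕ`. -/
abbrev Baire := ℕ → ℕ

/-- `φ` is a scale on `P ⊆ Baire`. -/
def IsScale (P : Set Baire) (φ : ℕ → Baire → Ordinal) : Prop :=
  ∀ (x : ℕ → Baire) (y : Baire) (l : ℕ → Ordinal),
    (∀ i, x i ∈ P) →
    (∀ n, ∃ m, ∀ i, m ≤ i → x i n = y n) →
    (∀ n, ∃ m, ∀ i, m ≤ i → φ n (x i) = l n) →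
    y ∈ P ∧ ∀ n, φ n y ≤ l n

/-- `φ` is a scale on `Q ⊆ Baire × Ordinal`, the ordinal coordinate carrying the
discrete topology (so a sequence of ordinals converges iff it is eventually constant). -/
def IsScaleOrd (Q : Set (Baire × Ordinal)) (φ : ℕ → Baire × Ordinal → Ordinal) : Prop :=
  ∀ (x : ℕ → Baire) (a : ℕ → Ordinal) (y : Baire) (α : Ordinal) (l : ℕ → Ordinal),
    (∀ i, (x i, a i) ∈ Q) →
    (∀ n, ∃ m, ∀ i, m ≤ i → x i n = y n) →
    (∃ m, ∀ i, m ≤ i → a i = α) →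
    (∀ n, ∃ m, ∀ i, m ≤ i → φ n (x i, a i) = l n) →
    (y, α) ∈ Q ∧ ∀ n, φ n (y, α) ≤ l n

/-!
Choose for each `x` in the projection the witness `α` minimising `(φ₀(x, α), α)`
lexicographically, and norm `x` by the triple `(φ₀(x, α), α, φₙ(x, α))` ordered
lexicographically. If these triples stabilise along `xᵢ → y`, so do the witnesses, and the
scale on `Q` puts `(y, β)` in `Q` for the limit witness `β` with smaller norms; minimality of
the witness chosen for `y` then bounds the triple of `y`. Finally, norms may be replaced by
any family of ordinals inducing the same order, which brings the lexicographic values down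
to ordinals of any universe.
-/

open Function Filter

universe u v w

def IsPreorderScale {β : Type*} [Preorder β] (P : Set Baire) (φ : ℕ → Baire → β) : Prop :=
  ∀ (x : ℕ → Baire) (y : Baire) (l : ℕ → β),
    (∀ i, x i ∈ P) →
    (∀ n, ∃ m, ∀ i, m ≤ i → x i n = y n) →
    (∀ n, ∃ m, ∀ i, m ≤ i → φ n (x i) = l n) →
    y ∈ P ∧ ∀ n, φ n y ≤ l n

theorem IsPreorderScale.of_le_iff {β γ : Type*} [PartialOrder β] [PartialOrder γ]
    {P : Set Baire} {φ : ℕ → Baire → β} {ψ : ℕ → Baire → γ} (hφ : IsPreorderScale P φ)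
    (h : ∀ n x z, ψ n x ≤ ψ n z ↔ φ n x ≤ φ n z) : IsPreorderScale P ψ := by
  intro x y l hxP hconv hlim
  choose M hM using hlim
  have hφlim : ∀ n, ∃ m, ∀ i, m ≤ i → φ n (x i) = φ n (x (M n)) := fun n =>
    ⟨M n, fun i hi =>
      have e := (hM n i hi).trans (hM n (M n) le_rfl).symm
      le_antisymm ((h _ _ _).1 e.le) ((h _ _ _).1 e.ge)⟩
  obtain ⟨hyP, hyle⟩ := hφ x y _ hxP hconv hφlim
  exact ⟨hyP, fun n => hM n (M n) le_rfl ▸ (h _ _ _).2 (hyle n)⟩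

theorem exists_ordinal_le_iff_le {α : Type u} {β : Type*} [LinearOrder β]
    [WellFoundedLT β] (f : α → β) :
    ∃ g : α → Ordinal.{max u w}, ∀ a b, g a ≤ g b ↔ f a ≤ f b := by
  let r : α → α → Prop := InvImage (· < ·) f
  have : IsWellFounded α r := ⟨InvImage.wf f wellFounded_lt⟩
  have rank_le : ∀ a b, f a ≤ f b → IsWellFounded.rank r a ≤ IsWellFounded.rank r b := by
    intro a b hab
    rw [IsWellFounded.rank_eq r a]
    exact Ordinal.iSup_le fun c =>
      Order.succ_le_of_lt (IsWellFounded.rank_lt_of_rel (c.2.trans_le hab : r c b))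
  refine ⟨fun a => Ordinal.lift.{w} (IsWellFounded.rank r a), fun a b => ?_⟩
  rw [Ordinal.lift_le]
  exact ⟨fun h => not_lt.1 fun hlt => (IsWellFounded.rank_lt_of_rel (r := r) hlt).not_ge h,
    rank_le a b⟩

theorem exists_isScale_of_isPreorderScale {β : Type*} [LinearOrder β] [WellFoundedLT β]
    {P : Set Baire} {φ : ℕ → Baire → β} (hφ : IsPreorderScale P φ) :
    ∃ ψ : ℕ → Baire → Ordinal, IsScale P ψ := by
  choose ψ hψ using fun n => exists_ordinal_le_iff_le (φ n)
  exact ⟨ψ, hφ.of_le_iff hψ⟩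

section Projection

variable {Q : Set (Baire × Ordinal.{u})} {φ : ℕ → Baire × Ordinal.{u} → Ordinal.{v}}

def witnessKey (φ : ℕ → Baire × Ordinal.{u} → Ordinal.{v}) (x : Baire) (α : Ordinal.{u}) :
    Ordinal.{v} ×ₗ Ordinal.{u} :=
  toLex (φ 0 (x, α), α)

open Classical in
noncomputable def bestWitness (Q : Set (Baire × Ordinal.{u}))
    (φ : ℕ → Baire × Ordinal.{u} → Ordinal.{v}) (x : Baire) : Ordinal.{u} :=
  if h : ∃ α, (x, α) ∈ Q then argminOn (witnessKey φ x) {α | (x, α) ∈ Q} h else 0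

noncomputable def projNorm (Q : Set (Baire × Ordinal.{u}))
    (φ : ℕ → Baire × Ordinal.{u} → Ordinal.{v}) (n : ℕ) (x : Baire) :
    (Ordinal.{v} ×ₗ Ordinal.{u}) ×ₗ Ordinal.{v} :=
  toLex (witnessKey φ x (bestWitness Q φ x), φ n (x, bestWitness Q φ x))

theorem bestWitness_mem {x : Baire} (h : ∃ α, (x, α) ∈ Q) : (x, bestWitness Q φ x) ∈ Q := by
  rw [bestWitness, dif_pos h]
  exact argminOn_mem _ {α | (x, α) ∈ Q} h

theorem witnessKey_bestWitness_le {x : Baire} {α : Ordinal.{u}} (h : (x, α) ∈ Q) :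
    witnessKey φ x (bestWitness Q φ x) ≤ witnessKey φ x α := by
  rw [bestWitness, dif_pos ⟨α, h⟩]
  exact argminOn_le _ {α | (x, α) ∈ Q} h

theorem projNorm_le_of_mem {x : Baire} {α : Ordinal.{u}} (n : ℕ) (h : (x, α) ∈ Q) :
    projNorm Q φ n x ≤ toLex (witnessKey φ x α, φ n (x, α)) := by
  rcases (witnessKey_bestWitness_le h).lt_or_eq with hlt | heq
  · exact (Prod.Lex.toLex_lt_toLex.2 (Or.inl hlt)).le
  · have hα : bestWitness Q φ x = α := congrArg (fun k => (ofLex k).2) heq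
    rw [projNorm, hα]

theorem projNorm_le_projNorm {x y : Baire} {β : Ordinal.{u}} (n : ℕ) (hyβ : (y, β) ∈ Q)
    (hxβ : bestWitness Q φ x = β) (h₀ : φ 0 (y, β) ≤ φ 0 (x, β))
    (hₙ : φ n (y, β) ≤ φ n (x, β)) : projNorm Q φ n y ≤ projNorm Q φ n x :=
  (projNorm_le_of_mem n hyβ).trans <| by
    rw [projNorm, hxβ]
    exact Prod.Lex.toLex_mono ⟨Prod.Lex.toLex_mono ⟨h₀, le_rfl⟩, hₙ⟩

theorem IsScaleOrd.isPreorderScale_projNorm (hφ : IsScaleOrd Q φ) :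
    IsPreorderScale {x | ∃ α, (x, α) ∈ Q} (projNorm Q φ) := by
  intro x y t hxP hconv hlim
  simp only [← eventually_atTop] at hlim
  set w := fun i => bestWitness Q φ (x i)
  set β := (ofLex (ofLex (t 0)).1).2
  set C := fun n => (ofLex (t n)).2
  have hw : ∀ᶠ i in atTop, w i = β :=
    (hlim 0).mono fun i hi => congrArg (fun t => (ofLex (ofLex t).1).2) hi
  have hC : ∀ n, ∀ᶠ i in atTop, φ n (x i, w i) = C n :=
    fun n => (hlim n).mono fun i hi => congrArg (fun t => (ofLex t).2) hi
  obtain ⟨hyβ, hyC⟩ := hφ x w y β C (fun i => bestWitness_mem (hxP i)) hconv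
    (eventually_atTop.1 hw) (fun n => eventually_atTop.1 (hC n))
  refine ⟨⟨β, hyβ⟩, fun n => ?_⟩
  obtain ⟨i, hi₀, hiₙ, hiw⟩ := ((hlim 0).and ((hlim n).and hw)).exists
  have hCi : ∀ m, projNorm Q φ m (x i) = t m → C m = φ m (x i, β) := by
    intro m h
    rw [← hiw]
    exact congrArg (fun t => (ofLex t).2) h.symm
  rw [← hiₙ]
  -- for `n = 0` the last coordinate of `t 0` is `φ₀` at the witness, which bounds `φ₀(y, β)`
  exact projNorm_le_projNorm n hyβ hiw ((hyC 0).trans_eq (hCi 0 hi₀))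
    ((hyC n).trans_eq (hCi n hiₙ))

end Projection

/-- If `Q ⊆ Baire × κ` admits a scale, then `P = {x : ∃ α < κ, (x,α) ∈ Q}`
admits a scale. -/
theorem exists_scale_of_ordinal_projection (κ : Ordinal) (Q : Set (Baire × Ordinal))
    (hQ : ∀ p ∈ Q, p.2 < κ)
    (h : ∃ φ : ℕ → Baire × Ordinal → Ordinal, IsScaleOrd Q φ) :
    ∃ ψ : ℕ → Baire → Ordinal, IsScale {x : Baire | ∃ α < κ, (x, α) ∈ Q} ψ := by
  obtain ⟨φ, hφ⟩ := h
  have hP : {x : Baire | ∃ α < κ, (x, α) ∈ Q} = {x | ∃ α, (x, α) ∈ Q} :=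
    Set.ext fun x => ⟨fun ⟨α, _, hα⟩ => ⟨α, hα⟩, fun ⟨α, hα⟩ => ⟨α, hQ _ hα, hα⟩⟩
  rw [hP]
  exact exists_isScale_of_isPreorderScale hφ.isPreorderScale_projNorm
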